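/- For every formula-based program P and every countable ordinal α, the immediate consequence operator T_P is α-monotonic: for all interpretations I and J, I ⊑_α J implies T_P(I) ⊑_α T_P(J). -/

import Mathlib

/-!
Infinite-valued semantics for formula-based logic programs
(Rondogiannis–Wadge style), following Lüdecke,
"Every Formula-Based Logic Program Has a Least Infinite-Valued Model".
-/

noncomputable section

namespace ILP

attribute [local instance] Classical.propDecidable

/-- The first uncountable ordinal. -/
def omega1 : Ordinal.{0} := Ordinal.omega 1

lemma omega1_isLimit : Order.IsSuccLimit omega1 := Cardinal.isSuccLimit_omega 1

lemma zero_lt_omega1 : (0 : Ordinal) < omega1 := omega1_isLimit.pos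

lemma succ_lt_omega1 {a : Ordinal} (h : a < omega1) : a + 1 < omega1 := by
  rw [Ordinal.add_one_eq_succ]
  exact omega1_isLimit.succ_lt h

/-- Pre-truth-values: `F α`, `0`, `T α` for arbitrary ordinals `α`. -/
inductive TVPre : Type 1 where
  | F : Ordinal → TVPre
  | zero : TVPre
  | T : Ordinal → TVPre

/-- A pre-truth-value is countable if its index is a countable ordinal. -/
def TVPre.countable : TVPre → Prop
  | .F a => a < omega1
  | .zero => True
  | .T a => a < omega1

/-- The set `W` of truth values:
`F_α` (false values) for countable `α`, `0`, and `T_α` (true values) for countable `α`. -/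
def W : Type 1 := {v : TVPre // v.countable}

/-- The strict order on truth values:
`F_0 < F_1 < ... < 0 < ... < T_1 < T_0`. -/
def TVPre.lt : TVPre → TVPre → Prop
  | .F a, .F b => a < b
  | .F _, .zero => True
  | .F _, .T _ => True
  | .zero, .T _ => True
  | .T a, .T b => b < a
  | _, _ => False

instance : LT W := ⟨fun x y => TVPre.lt x.1 y.1⟩

instance : LE W := ⟨fun x y => x = y ∨ x < y⟩

lemma TVPre.lt_trans {a b c : TVPre} (hab : a.lt b) (hbc : b.lt c) : a.lt c := by
  cases a <;> cases b <;> cases c <;> simp_all [TVPre.lt] <;>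
    first | exact hab.trans hbc | exact hbc.trans hab

lemma TVPre.lt_irrefl {a : TVPre} (h : a.lt a) : False := by
  cases a <;> simp_all [TVPre.lt]

instance instLinearOrderW : LinearOrder W where
  le_refl a := Or.inl rfl
  le_trans a b c hab hbc := by
    rcases hab with rfl | hab
    · exact hbc
    rcases hbc with rfl | hbc
    · exact Or.inr hab
    · exact Or.inr (TVPre.lt_trans hab hbc)
  le_antisymm a b hab hba := by
    rcases hab with rfl | hab
    · rfl
    rcases hba with rfl | hba
    · rfl
    exact absurd (TVPre.lt_trans hab hba) TVPre.lt_irrefl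
  le_total a b := by
    obtain ⟨a1, ha⟩ := a
    obtain ⟨b1, hb⟩ := b
    have tri : a1 = b1 ∨ a1.lt b1 ∨ b1.lt a1 := by
      cases a1 <;> cases b1 <;> simp [TVPre.lt] <;> (try rename_i x y) <;>
        (try rcases lt_trichotomy x y with h | h | h) <;> tauto
    rcases tri with h | h | h
    · exact Or.inl (Or.inl (Subtype.ext h))
    · exact Or.inl (Or.inr h)
    · exact Or.inr (Or.inr h)
  lt_iff_le_not_ge a b := by
    constructor
    · intro h
      refine ⟨Or.inr h, ?_⟩
      rintro (rfl | h')
      · exact TVPre.lt_irrefl h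
      · exact TVPre.lt_irrefl (TVPre.lt_trans h h')
    · rintro ⟨rfl | h, h2⟩
      · exact absurd (Or.inl rfl) h2
      · exact h
  toDecidableLE := Classical.decRel _

/-- The false value `F_α`. -/
def WF (a : Ordinal) (h : a < omega1) : W := ⟨.F a, h⟩

/-- The true value `T_α`. -/
def WT (a : Ordinal) (h : a < omega1) : W := ⟨.T a, h⟩

/-- The undefined value `0`. -/
def WZ : W := ⟨.zero, trivial⟩

/-- `deg w < α` : the degree of `w` (which is `∞` for `0`) is less than `α`. -/
def degLT (w : W) (α : Ordinal) : Prop :=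
  match w.1 with
  | .F a => a < α
  | .zero => False
  | .T a => a < α

/-- The set of indices of true values occurring in `M`. -/
def TIdx (M : Set W) : Set Ordinal := {a | ∃ w ∈ M, w.1 = TVPre.T a}

/-- The set of indices of false values occurring in `M`. -/
def FIdx (M : Set W) : Set Ordinal := {a | ∃ w ∈ M, w.1 = TVPre.F a}

lemma mem_lt_omega1_of_TIdx {M : Set W} {a : Ordinal} (h : a ∈ TIdx M) : a < omega1 := by
  obtain ⟨w, _, hw⟩ := h
  have := w.2
  rw [hw] at this
  exact this

lemma mem_lt_omega1_of_FIdx {M : Set W} {a : Ordinal} (h : a ∈ FIdx M) : a < omega1 := by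
  obtain ⟨w, _, hw⟩ := h
  have := w.2
  rw [hw] at this
  exact this

/-- The least upper bound of a subset of `W`. -/
def Wsup (M : Set W) : W :=
  if h : (TIdx M).Nonempty then
    WT (sInf (TIdx M))
      (lt_of_le_of_lt (csInf_le' h.choose_spec) (mem_lt_omega1_of_TIdx h.choose_spec))
  else if WZ ∈ M then WZ
  else if h2 : sSup (FIdx M) < omega1 then WF (sSup (FIdx M)) h2
  else WZ

/-- The greatest lower bound of a subset of `W`. -/
def Winf (M : Set W) : W :=
  if h : (FIdx M).Nonempty then
    WF (sInf (FIdx M))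
      (lt_of_le_of_lt (csInf_le' h.choose_spec) (mem_lt_omega1_of_FIdx h.choose_spec))
  else if WZ ∈ M then WZ
  else if h2 : sSup (TIdx M) < omega1 then WT (sSup (TIdx M)) h2
  else WZ

/-- The semantics of negation on `W`. -/
def Wneg : W → W
  | ⟨.F a, h⟩ => WT (a + 1) (succ_lt_omega1 h)
  | ⟨.zero, _⟩ => WZ
  | ⟨.T a, h⟩ => WF (a + 1) (succ_lt_omega1 h)

/-! ### Syntax -/

/-- A first-order language with finitely many predicate symbols (at least one),
finitely many function symbols and finitely many constants (at least one). -/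
structure Language where
  nPred : ℕ
  predAr : Fin nPred → ℕ
  nFun : ℕ
  funAr : Fin nFun → ℕ
  nConst : ℕ
  npos : 1 ≤ nPred
  cpos : 1 ≤ nConst

variable {L : Language}

/-- Terms of the language; variables are indexed by natural numbers. -/
inductive Term (L : Language) : Type where
  | var : ℕ → Term L
  | const : Fin L.nConst → Term L
  | func : (f : Fin L.nFun) → (Fin (L.funAr f) → Term L) → Term L

/-- A term is ground if it contains no variables. -/
def Term.ground : Term L → Prop
  | .var _ => False
  | .const _ => True
  | .func _ ts => ∀ i, (ts i).ground

/-- The Herbrand universe: the set of ground terms. -/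
def HU (L : Language) : Type := {t : Term L // t.ground}

/-- Formulas of the language. -/
inductive Formula (L : Language) : Type where
  | verum : Formula L
  | falsum : Formula L
  | atom : (p : Fin L.nPred) → (Fin (L.predAr p) → Term L) → Formula L
  | neg : Formula L → Formula L
  | conj : Formula L → Formula L → Formula L
  | disj : Formula L → Formula L → Formula L
  | all : ℕ → Formula L → Formula L
  | ex : ℕ → Formula L → Formula L

/-- A ground atom: a predicate symbol applied to ground terms.
The Herbrand base `H_B` is the type of ground atoms. -/
structure GroundAtom (L : Language) : Type where
  pred : Fin L.nPred
  args : Fin (L.predAr pred) → HU L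

/-- An (infinite-valued Herbrand) interpretation. -/
def Interp (L : Language) : Type 1 := GroundAtom L → W

/-- Evaluation of a term under a variable assignment. -/
def Term.evalT (h : ℕ → HU L) : Term L → HU L
  | .var n => h n
  | .const c => ⟨.const c, trivial⟩
  | .func f ts => ⟨.func f fun i => ((ts i).evalT h).1, fun i => ((ts i).evalT h).2⟩

/-- The infinite-valued semantics of formulas, relative to an interpretation and
a variable assignment. -/
def Formula.eval (I : Interp L) : Formula L → (ℕ → HU L) → W
  | .verum, _ => WT 0 zero_lt_omega1
  | .falsum, _ => WF 0 zero_lt_omega1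
  | .atom p ts, h => I ⟨p, fun i => (ts i).evalT h⟩
  | .neg φ, h => Wneg (φ.eval I h)
  | .conj φ ψ, h => min (φ.eval I h) (ψ.eval I h)
  | .disj φ ψ, h => max (φ.eval I h) (ψ.eval I h)
  | .ex v φ, h => Wsup (Set.range fun u : HU L => φ.eval I (Function.update h v u))
  | .all v φ, h => Winf (Set.range fun u : HU L => φ.eval I (Function.update h v u))

/-- The variables occurring in a term. -/
def Term.vars : Term L → Set ℕ
  | .var n => {n}
  | .const _ => ∅
  | .func _ ts => ⋃ i, (ts i).vars

/-- The free variables of a formula. -/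
def Formula.freeVars : Formula L → Set ℕ
  | .verum => ∅
  | .falsum => ∅
  | .atom _ ts => ⋃ i, (ts i).vars
  | .neg φ => φ.freeVars
  | .conj φ ψ => φ.freeVars ∪ ψ.freeVars
  | .disj φ ψ => φ.freeVars ∪ ψ.freeVars
  | .all v φ => φ.freeVars \ {v}
  | .ex v φ => φ.freeVars \ {v}

/-- Applying a substitution to a term. -/
def Term.subst (σ : ℕ → Term L) : Term L → Term L
  | .var n => σ n
  | .const c => .const c
  | .func f ts => .func f fun i => (ts i).subst σ

/-- Applying a substitution to a formula (bound variables are not substituted). -/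
def Formula.subst (σ : ℕ → Term L) : Formula L → Formula L
  | .verum => .verum
  | .falsum => .falsum
  | .atom p ts => .atom p fun i => (ts i).subst σ
  | .neg φ => .neg (φ.subst σ)
  | .conj φ ψ => .conj (φ.subst σ) (ψ.subst σ)
  | .disj φ ψ => .disj (φ.subst σ) (ψ.subst σ)
  | .all v φ => .all v (φ.subst (Function.update σ v (Term.var v)))
  | .ex v φ => .ex v (φ.subst (Function.update σ v (Term.var v)))

/-- A formula-based rule `A ← φ`: the head is an atom `P(t₁,…,tₛ)`
(hence distinct from `⊤` and `⊥`) and the body is an arbitrary formula. -/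
structure Rule (L : Language) : Type where
  headPred : Fin L.nPred
  headArgs : Fin (L.predAr headPred) → Term L
  body : Formula L

/-- The head of a rule, as an atomic formula. -/
def Rule.headAtom (r : Rule L) : Formula L := .atom r.headPred r.headArgs

/-- A formula-based logic program: a finite set of formula-based rules. -/
structure Program (L : Language) : Type where
  rules : Set (Rule L)
  finite : rules.Finite

/-- The set `P_G` of ground instances of a program `P`: pairs `(Aσ, φσ)` obtained
from a rule `A ← φ` of `P` and a substitution `σ` such that `Aσ` is a ground atom
and `φσ` has no free variables. -/
def groundInstances (P : Program L) : Set (GroundAtom L × Formula L) :=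
  {Aφ | ∃ r ∈ P.rules, ∃ σ : ℕ → Term L,
    (∃ hg : ∀ i, ((r.headArgs i).subst σ).ground,
      Aφ.1 = ⟨r.headPred, fun i => ⟨(r.headArgs i).subst σ, hg i⟩⟩) ∧
    Aφ.2 = r.body.subst σ ∧ (r.body.subst σ).freeVars = ∅}

/-- A default variable assignment (possible since there is at least one constant). -/
def defaultAssignment (L : Language) : ℕ → HU L :=
  fun _ => ⟨.const ⟨0, L.cpos⟩, trivial⟩

/-- The value of a closed formula (independent of the variable assignment). -/
def Formula.evalClosed (I : Interp L) (φ : Formula L) : W :=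
  φ.eval I (defaultAssignment L)

/-- The immediate consequence operator `T_P`. -/
def TP (P : Program L) (I : Interp L) : Interp L :=
  fun A => Wsup {w | ∃ φ : Formula L, (A, φ) ∈ groundInstances P ∧ w = φ.evalClosed I}

/-- `I ∥ F_β` : the set of ground atoms receiving value `F_β` under `I`. -/
def Ifalse (I : Interp L) (β : Ordinal) : Set (GroundAtom L) := {A | (I A).1 = TVPre.F β}

/-- `I ∥ T_β` : the set of ground atoms receiving value `T_β` under `I`. -/
def Itrue (I : Interp L) (β : Ordinal) : Set (GroundAtom L) := {A | (I A).1 = TVPre.T β}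

/-- `I =_α J`. -/
def eqa (α : Ordinal) (I J : Interp L) : Prop :=
  ∀ β ≤ α, Ifalse I β = Ifalse J β ∧ Itrue I β = Itrue J β

/-- `I ⊑_α J`. -/
def sqa (α : Ordinal) (I J : Interp L) : Prop :=
  (∀ β < α, eqa β I J) ∧ Ifalse J α ⊆ Ifalse I α ∧ Itrue I α ⊆ Itrue J α

/-- `I ⊏_α J`. -/
def sqlt (α : Ordinal) (I J : Interp L) : Prop := sqa α I J ∧ ¬ eqa α I J

/-- `I ⊑_∞ J`. -/
def sqinf (I J : Interp L) : Prop := I = J ∨ ∃ α < omega1, sqlt α I J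

/-- `I` satisfies the rule `A ← φ`. -/
def satisfies (I : Interp L) (r : Rule L) : Prop :=
  ∀ h : ℕ → HU L, r.body.eval I h ≤ r.headAtom.eval I h

/-- `I` is a model of `P`. -/
def isModel (I : Interp L) (P : Program L) : Prop := ∀ r ∈ P.rules, satisfies I r

/-- The transfinite iterates `T^β_{P,α}(I)`. -/
def iter (P : Program L) (α : Ordinal) (hα : α < omega1) (I : Interp L)
    (β : Ordinal) : Interp L :=
  Ordinal.limitRecOn β I (fun _ J => TP P J)
    (fun β _ ih A =>
      if degLT (I A) α then I A
      else if ∃ γ, ∃ hγ : γ < β, (ih γ hγ A).1 = TVPre.T α then WT α hα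
      else if ∀ γ, ∀ hγ : γ < β, (ih γ hγ A).1 = TVPre.F α then WF α hα
      else WF (α + 1) (succ_lt_omega1 hα))

/-- The union `⊔_{γ<α} I_γ` of a family of interpretations. -/
def unionInterp (α : Ordinal) (hα : α < omega1) (Ig : ∀ γ, γ < α → Interp L) :
    Interp L := fun A =>
  if h : ∃ ζ, ∃ hζ : ζ < α, ((Ig ζ hζ) A).1 = TVPre.F ζ ∨ ((Ig ζ hζ) A).1 = TVPre.T ζ
  then Ig h.choose h.choose_spec.choose A
  else WF α hα

/-- The approximants `M_α` of a program `P`. -/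
def approx (P : Program L) (α : Ordinal) : Interp L :=
  if hα : α < omega1 then
    if (∀ γ, ∀ _ : γ < α, ∀ ζ, ζ < γ → eqa ζ (approx P ζ) (approx P γ)) ∧
        sqa α (unionInterp α hα fun γ _ => approx P γ)
          (TP P (unionInterp α hα fun γ _ => approx P γ))
    then iter P α hα (unionInterp α hα fun γ _ => approx P γ) omega1
    else fun _ => WF 0 zero_lt_omega1
  else fun _ => WF 0 zero_lt_omega1
termination_by α
decreasing_by
  all_goals first | assumption | exact lt_trans ‹_› ‹_›

/-- The depth `δ_P` of a program `P`. -/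
def depth (P : Program L) : Ordinal :=
  sInf {δ | δ < omega1 ∧ ∀ γ, δ ≤ γ → γ < omega1 →
    Ifalse (approx P γ) γ = ∅ ∧ Itrue (approx P γ) γ = ∅}

/-- The least infinite-valued model `M_P` of a program `P`. -/
def MP (P : Program L) : Interp L := fun A =>
  if degLT (approx P (depth P) A) (depth P) then approx P (depth P) A else WZ

/-! ### Three-valued semantics -/

/-- The three truth values `F < 0 < T`. -/
inductive TV3 : Type where
  | F : TV3
  | Z : TV3
  | T : TV3
deriving DecidableEq

/-- Numeric coding of the three truth values. -/
def TV3.toNat : TV3 → ℕ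
  | .F => 0
  | .Z => 1
  | .T => 2

instance : LinearOrder TV3 :=
  LinearOrder.lift' TV3.toNat (fun a b => by
    cases a <;> cases b <;> simp [TV3.toNat])

/-- A three-valued interpretation. -/
def Interp3 (L : Language) : Type := GroundAtom L → TV3

/-- Supremum of a set of three-valued truth values. -/
def sup3 (S : Set TV3) : TV3 :=
  if TV3.T ∈ S then .T else if TV3.Z ∈ S then .Z else .F

/-- Infimum of a set of three-valued truth values. -/
def inf3 (S : Set TV3) : TV3 :=
  if TV3.F ∈ S then .F else if TV3.Z ∈ S then .Z else .T

/-- Three-valued negation. -/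
def neg3 : TV3 → TV3
  | .F => .T
  | .Z => .Z
  | .T => .F

/-- The three-valued semantics of formulas. -/
def Formula.eval3 (K : Interp3 L) : Formula L → (ℕ → HU L) → TV3
  | .verum, _ => .T
  | .falsum, _ => .F
  | .atom p ts, h => K ⟨p, fun i => (ts i).evalT h⟩
  | .neg φ, h => neg3 (φ.eval3 K h)
  | .conj φ ψ, h => min (φ.eval3 K h) (ψ.eval3 K h)
  | .disj φ ψ, h => max (φ.eval3 K h) (ψ.eval3 K h)
  | .ex v φ, h => sup3 (Set.range fun u : HU L => φ.eval3 K (Function.update h v u))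
  | .all v φ, h => inf3 (Set.range fun u : HU L => φ.eval3 K (Function.update h v u))

/-- Collapsing all false values to `F` and all true values to `T`. -/
def collapse : W → TV3 := fun w =>
  match w.1 with
  | .F _ => .F
  | .zero => .Z
  | .T _ => .T

/-- The collapse of an infinite-valued interpretation. -/
def collapseI (I : Interp L) : Interp3 L := fun A => collapse (I A)

/-- `K` is a three-valued model of `P`. -/
def isModel3 (K : Interp3 L) (P : Program L) : Prop :=
  ∀ r ∈ P.rules, ∀ h : ℕ → HU L, r.body.eval3 K h ≤ r.headAtom.eval3 K h

/-- The three-valued interpretation `M_{P,3}`. -/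
def MP3 (P : Program L) : Interp3 L := collapseI (MP P)

/-- The negation degree of a formula. -/
def Formula.negDeg : Formula L → ℕ
  | .verum => 0
  | .falsum => 0
  | .atom _ _ => 0
  | .neg φ => φ.negDeg + 1
  | .conj φ ψ => max φ.negDeg ψ.negDeg
  | .disj φ ψ => max φ.negDeg ψ.negDeg
  | .all _ φ => φ.negDeg
  | .ex _ φ => φ.negDeg

/-!
`⊑_α` can be read off from the thresholds `v ≤ F_β` and `T_β ≤ v` for `β ≤ α`:
below level `α` they must agree, at level `α` they are implications in opposite directions.
Minima, maxima, suprema and infima respect such conditions: a supremum lies below `F_β` iff all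
arguments do, and above `T_β` iff one of them does, because the least index of a true value is
attained (dually for infima). Negation trades the thresholds at `T_γ`, `F_γ` for those at
`F_{γ+1}`, `T_{γ+1}`, so for it only agreement below `α` matters. Induction on formulas then
gives `⟦φ⟧^I ⊑_α ⟦φ⟧^J` atomwise, and `T_P(I)(A)` is a supremum of such values.
-/

theorem _root_.IsLowerSet.min_mem_iff {α : Type*} [LinearOrder α] {s : Set α}
    (hs : IsLowerSet s) {a b : α} : min a b ∈ s ↔ a ∈ s ∨ b ∈ s := by
  rcases le_total a b with h | h
  · rw [min_eq_left h, iff_self_or]; exact fun hb => hs h hb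
  · rw [min_eq_right h, iff_or_self]; exact fun ha => hs h ha

theorem _root_.IsUpperSet.max_mem_iff {α : Type*} [LinearOrder α] {s : Set α}
    (hs : IsUpperSet s) {a b : α} : max a b ∈ s ↔ a ∈ s ∨ b ∈ s := by
  rcases le_total a b with h | h
  · rw [max_eq_right h, iff_or_self]; exact fun ha => hs h ha
  · rw [max_eq_left h, iff_self_or]; exact fun hb => hs h hb

theorem _root_.IsUpperSet.min_mem_iff {α : Type*} [LinearOrder α] {s : Set α}
    (hs : IsUpperSet s) {a b : α} : min a b ∈ s ↔ a ∈ s ∧ b ∈ s := by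
  rw [← not_iff_not, not_and_or]
  exact hs.compl.min_mem_iff

theorem _root_.IsLowerSet.max_mem_iff {α : Type*} [LinearOrder α] {s : Set α}
    (hs : IsLowerSet s) {a b : α} : max a b ∈ s ↔ a ∈ s ∧ b ∈ s := by
  rw [← not_iff_not, not_and_or]
  exact hs.compl.max_mem_iff

namespace W

/-- `v.LeF β` says `v ≤ F_β` and `v.GeT β` says `T_β ≤ v`; neither needs `β < ω₁`. -/
def LeF (v : W) (β : Ordinal) : Prop := ∃ γ ≤ β, v.1 = .F γ

def GeT (v : W) (β : Ordinal) : Prop := ∃ γ ≤ β, v.1 = .T γ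

variable {v w : W} {β : Ordinal}

lemma isLowerSet_setOf_leF (β : Ordinal) : IsLowerSet {v : W | v.LeF β} := by
  intro v u huv hv
  obtain ⟨γ, hγβ, hv⟩ := hv
  rcases huv with rfl | h
  · exact ⟨γ, hγβ, hv⟩
  · change TVPre.lt _ v.1 at h
    obtain ⟨_ | _ | _, _⟩ := u <;> simp only [TVPre.lt, hv] at h
    exact ⟨_, h.le.trans hγβ, rfl⟩

lemma isUpperSet_setOf_geT (β : Ordinal) : IsUpperSet {v : W | v.GeT β} := by
  intro v u huv hv
  obtain ⟨γ, hγβ, hv⟩ := hv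
  rcases huv with rfl | h
  · exact ⟨γ, hγβ, hv⟩
  · change TVPre.lt v.1 _ at h
    obtain ⟨_ | _ | _, _⟩ := u <;> simp only [TVPre.lt, hv] at h
    exact ⟨_, h.le.trans hγβ, rfl⟩

lemma leF_min : (min v w).LeF β ↔ v.LeF β ∨ w.LeF β := (isLowerSet_setOf_leF β).min_mem_iff
lemma leF_max : (max v w).LeF β ↔ v.LeF β ∧ w.LeF β := (isLowerSet_setOf_leF β).max_mem_iff
lemma geT_min : (min v w).GeT β ↔ v.GeT β ∧ w.GeT β := (isUpperSet_setOf_geT β).min_mem_iff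
lemma geT_max : (max v w).GeT β ↔ v.GeT β ∨ w.GeT β := (isUpperSet_setOf_geT β).max_mem_iff

lemma val_eq_F_iff : v.1 = .F β ↔ v.LeF β ∧ ∀ γ < β, ¬ v.LeF γ := by
  constructor
  · intro hv
    refine ⟨⟨β, le_rfl, hv⟩, fun γ hγβ ⟨δ, hδγ, hv'⟩ => ?_⟩
    rw [hv, TVPre.F.injEq] at hv'
    exact (hv' ▸ hδγ).not_gt hγβ
  · rintro ⟨⟨γ, hγβ, hv⟩, hmin⟩
    obtain hlt | rfl := hγβ.lt_or_eq
    · exact absurd ⟨γ, le_rfl, hv⟩ (hmin γ hlt)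
    · exact hv

lemma val_eq_T_iff : v.1 = .T β ↔ v.GeT β ∧ ∀ γ < β, ¬ v.GeT γ := by
  constructor
  · intro hv
    refine ⟨⟨β, le_rfl, hv⟩, fun γ hγβ ⟨δ, hδγ, hv'⟩ => ?_⟩
    rw [hv, TVPre.T.injEq] at hv'
    exact (hv' ▸ hδγ).not_gt hγβ
  · rintro ⟨⟨γ, hγβ, hv⟩, hmin⟩
    obtain hlt | rfl := hγβ.lt_or_eq
    · exact absurd ⟨γ, le_rfl, hv⟩ (hmin γ hlt)
    · exact hv

lemma leF_Wneg : (Wneg v).LeF β ↔ ∃ γ < β, v.1 = .T γ := by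
  obtain ⟨_ | _ | _, _⟩ := v <;> simp [Wneg, WT, WF, WZ, LeF, Order.add_one_le_iff]

lemma geT_Wneg : (Wneg v).GeT β ↔ ∃ γ < β, v.1 = .F γ := by
  obtain ⟨_ | _ | _, _⟩ := v <;> simp [Wneg, WT, WF, WZ, GeT, Order.add_one_le_iff]

lemma bddAbove_FIdx (M : Set W) : BddAbove (FIdx M) :=
  ⟨omega1, fun _ hγ => (mem_lt_omega1_of_FIdx hγ).le⟩

lemma bddAbove_TIdx (M : Set W) : BddAbove (TIdx M) :=
  ⟨omega1, fun _ hγ => (mem_lt_omega1_of_TIdx hγ).le⟩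

variable {M : Set W}

lemma leF_Wsup (hβ : β < omega1) : (Wsup M).LeF β ↔ ∀ x ∈ M, x.LeF β := by
  constructor
  · rintro ⟨γ, hγβ, hsup⟩ ⟨x, hx⟩ hxM
    unfold Wsup at hsup
    split_ifs at hsup with hT hZ hF <;> simp only [WT, WZ, WF, TVPre.F.injEq, reduceCtorEq] at hsup
    obtain _ | _ | δ := x
    · have hδ : _ ∈ FIdx M := ⟨_, hxM, rfl⟩
      exact ⟨_, (le_csSup (bddAbove_FIdx M) hδ).trans (hsup ▸ hγβ), rfl⟩
    · exact absurd hxM hZ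
    · exact absurd ⟨δ, _, hxM, rfl⟩ hT
  · intro hM
    have hT : ¬ (TIdx M).Nonempty := by
      rintro ⟨γ, x, hxM, hx⟩
      obtain ⟨δ, -, hxδ⟩ := hM x hxM
      exact TVPre.noConfusion (hx.symm.trans hxδ)
    have hZ : WZ ∉ M := fun hZ => by
      obtain ⟨δ, -, hδ⟩ := hM WZ hZ
      exact TVPre.noConfusion hδ
    have hsup : sSup (FIdx M) ≤ β := csSup_le' <| by
      rintro γ ⟨x, hxM, hx⟩
      obtain ⟨δ, hδβ, hxδ⟩ := hM x hxM
      rw [hx, TVPre.F.injEq] at hxδ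
      exact hxδ ▸ hδβ
    rw [Wsup, dif_neg hT, if_neg hZ, dif_pos (hsup.trans_lt hβ)]
    exact ⟨_, hsup, rfl⟩

lemma geT_Wsup : (Wsup M).GeT β ↔ ∃ x ∈ M, x.GeT β := by
  constructor
  · rintro ⟨γ, hγβ, hsup⟩
    unfold Wsup at hsup
    split_ifs at hsup with hT <;> simp only [WT, WZ, WF, TVPre.T.injEq, reduceCtorEq] at hsup
    obtain ⟨x, hxM, hx⟩ := csInf_mem hT
    exact ⟨x, hxM, γ, hγβ, hsup ▸ hx⟩
  · rintro ⟨x, hxM, γ, hγβ, hx⟩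
    have hγ : γ ∈ TIdx M := ⟨x, hxM, hx⟩
    rw [Wsup, dif_pos ⟨γ, hγ⟩]
    exact ⟨_, (csInf_le' hγ).trans hγβ, rfl⟩

lemma geT_Winf (hβ : β < omega1) : (Winf M).GeT β ↔ ∀ x ∈ M, x.GeT β := by
  constructor
  · rintro ⟨γ, hγβ, hinf⟩ ⟨x, hx⟩ hxM
    unfold Winf at hinf
    split_ifs at hinf with hF hZ hT <;>
      simp only [WT, WZ, WF, TVPre.T.injEq, reduceCtorEq] at hinf
    obtain δ | _ | _ := x
    · exact absurd ⟨δ, _, hxM, rfl⟩ hF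
    · exact absurd hxM hZ
    · have hδ : _ ∈ TIdx M := ⟨_, hxM, rfl⟩
      exact ⟨_, (le_csSup (bddAbove_TIdx M) hδ).trans (hinf ▸ hγβ), rfl⟩
  · intro hM
    have hF : ¬ (FIdx M).Nonempty := by
      rintro ⟨γ, x, hxM, hx⟩
      obtain ⟨δ, -, hxδ⟩ := hM x hxM
      exact TVPre.noConfusion (hx.symm.trans hxδ)
    have hZ : WZ ∉ M := fun hZ => by
      obtain ⟨δ, -, hδ⟩ := hM WZ hZ
      exact TVPre.noConfusion hδ
    have hinf : sSup (TIdx M) ≤ β := csSup_le' <| by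
      rintro γ ⟨x, hxM, hx⟩
      obtain ⟨δ, hδβ, hxδ⟩ := hM x hxM
      rw [hx, TVPre.T.injEq] at hxδ
      exact hxδ ▸ hδβ
    rw [Winf, dif_neg hF, if_neg hZ, dif_pos (hinf.trans_lt hβ)]
    exact ⟨_, hinf, rfl⟩

lemma leF_Winf : (Winf M).LeF β ↔ ∃ x ∈ M, x.LeF β := by
  constructor
  · rintro ⟨γ, hγβ, hinf⟩
    unfold Winf at hinf
    split_ifs at hinf with hF <;> simp only [WT, WZ, WF, TVPre.F.injEq, reduceCtorEq] at hinf
    obtain ⟨x, hxM, hx⟩ := csInf_mem hF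
    exact ⟨x, hxM, γ, hγβ, hinf ▸ hx⟩
  · rintro ⟨x, hxM, γ, hγβ, hx⟩
    have hγ : γ ∈ FIdx M := ⟨x, hxM, hx⟩
    rw [Winf, dif_pos ⟨γ, hγ⟩]
    exact ⟨_, (csInf_le' hγ).trans hγβ, rfl⟩

end W

/-- `⊑_α` on single truth values, in threshold form (see `sqa_iff_forall_alphaLE`). -/
structure AlphaLE (α : Ordinal) (v w : W) : Prop where
  leF_iff : ∀ β < α, v.LeF β ↔ w.LeF β
  geT_iff : ∀ β < α, v.GeT β ↔ w.GeT β
  leF_of_leF : w.LeF α → v.LeF α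
  geT_of_geT : v.GeT α → w.GeT α

namespace AlphaLE

variable {α : Ordinal} {v w v₁ w₁ v₂ w₂ : W}

lemma val_eq_F_iff (h : AlphaLE α v w) {β : Ordinal} (hβ : β < α) :
    v.1 = .F β ↔ w.1 = .F β := by
  rw [W.val_eq_F_iff, W.val_eq_F_iff, h.leF_iff β hβ]
  exact and_congr_right' <| forall₂_congr fun γ hγ => not_congr (h.leF_iff γ (hγ.trans hβ))

lemma val_eq_T_iff (h : AlphaLE α v w) {β : Ordinal} (hβ : β < α) :
    v.1 = .T β ↔ w.1 = .T β := by
  rw [W.val_eq_T_iff, W.val_eq_T_iff, h.geT_iff β hβ]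
  exact and_congr_right' <| forall₂_congr fun γ hγ => not_congr (h.geT_iff γ (hγ.trans hβ))

lemma val_eq_F_of_val_eq_F (h : AlphaLE α v w) (hw : w.1 = .F α) : v.1 = .F α := by
  rw [W.val_eq_F_iff] at hw ⊢
  exact ⟨h.leF_of_leF hw.1, fun γ hγ => (not_congr (h.leF_iff γ hγ)).2 (hw.2 γ hγ)⟩

lemma val_eq_T_of_val_eq_T (h : AlphaLE α v w) (hv : v.1 = .T α) : w.1 = .T α := by
  rw [W.val_eq_T_iff] at hv ⊢
  exact ⟨h.geT_of_geT hv.1, fun γ hγ => (not_congr (h.geT_iff γ hγ)).1 (hv.2 γ hγ)⟩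

lemma of_val_eq_iff (hF : ∀ β < α, v.1 = .F β ↔ w.1 = .F β)
    (hT : ∀ β < α, v.1 = .T β ↔ w.1 = .T β) (hFα : w.1 = .F α → v.1 = .F α)
    (hTα : v.1 = .T α → w.1 = .T α) : AlphaLE α v w where
  leF_iff β hβ := exists_congr fun γ => and_congr_right fun hγ => hF γ (hγ.trans_lt hβ)
  geT_iff β hβ := exists_congr fun γ => and_congr_right fun hγ => hT γ (hγ.trans_lt hβ)
  leF_of_leF := by
    rintro ⟨γ, hγ, hw⟩
    obtain hlt | rfl := hγ.lt_or_eq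
    · exact ⟨γ, hγ, (hF γ hlt).2 hw⟩
    · exact ⟨γ, hγ, hFα hw⟩
  geT_of_geT := by
    rintro ⟨γ, hγ, hv⟩
    obtain hlt | rfl := hγ.lt_or_eq
    · exact ⟨γ, hγ, (hT γ hlt).1 hv⟩
    · exact ⟨γ, hγ, hTα hv⟩

lemma refl (α : Ordinal) (v : W) : AlphaLE α v v :=
  ⟨fun _ _ => Iff.rfl, fun _ _ => Iff.rfl, id, id⟩

lemma min (h₁ : AlphaLE α v₁ w₁) (h₂ : AlphaLE α v₂ w₂) :
    AlphaLE α (min v₁ v₂) (min w₁ w₂) where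
  leF_iff β hβ := by simp only [W.leF_min, h₁.leF_iff β hβ, h₂.leF_iff β hβ]
  geT_iff β hβ := by simp only [W.geT_min, h₁.geT_iff β hβ, h₂.geT_iff β hβ]
  leF_of_leF := by simpa only [W.leF_min] using Or.imp h₁.leF_of_leF h₂.leF_of_leF
  geT_of_geT := by simpa only [W.geT_min] using And.imp h₁.geT_of_geT h₂.geT_of_geT

lemma max (h₁ : AlphaLE α v₁ w₁) (h₂ : AlphaLE α v₂ w₂) :
    AlphaLE α (max v₁ v₂) (max w₁ w₂) where
  leF_iff β hβ := by simp only [W.leF_max, h₁.leF_iff β hβ, h₂.leF_iff β hβ]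
  geT_iff β hβ := by simp only [W.geT_max, h₁.geT_iff β hβ, h₂.geT_iff β hβ]
  leF_of_leF := by simpa only [W.leF_max] using And.imp h₁.leF_of_leF h₂.leF_of_leF
  geT_of_geT := by simpa only [W.geT_max] using Or.imp h₁.geT_of_geT h₂.geT_of_geT

lemma wneg (h : AlphaLE α v w) : AlphaLE α (Wneg v) (Wneg w) where
  leF_iff β hβ := by
    simp only [W.leF_Wneg]
    exact exists_congr fun γ => and_congr_right fun hγ => h.val_eq_T_iff (hγ.trans hβ)
  geT_iff β hβ := by
    simp only [W.geT_Wneg]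
    exact exists_congr fun γ => and_congr_right fun hγ => h.val_eq_F_iff (hγ.trans hβ)
  leF_of_leF := by
    simp only [W.leF_Wneg]
    exact fun ⟨γ, hγ, hw⟩ => ⟨γ, hγ, (h.val_eq_T_iff hγ).2 hw⟩
  geT_of_geT := by
    simp only [W.geT_Wneg]
    exact fun ⟨γ, hγ, hv⟩ => ⟨γ, hγ, (h.val_eq_F_iff hγ).1 hv⟩

lemma wsup (hα : α < omega1) {ι : Sort*} {f g : ι → W} (h : ∀ i, AlphaLE α (f i) (g i)) :
    AlphaLE α (Wsup (Set.range f)) (Wsup (Set.range g)) where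
  leF_iff β hβ := by
    simp only [W.leF_Wsup (hβ.trans hα), Set.forall_mem_range]
    exact forall_congr' fun i => (h i).leF_iff β hβ
  geT_iff β hβ := by
    simp only [W.geT_Wsup, Set.exists_range_iff]
    exact exists_congr fun i => (h i).geT_iff β hβ
  leF_of_leF := by
    simp only [W.leF_Wsup hα, Set.forall_mem_range]
    exact fun hg i => (h i).leF_of_leF (hg i)
  geT_of_geT := by
    simp only [W.geT_Wsup, Set.exists_range_iff]
    exact Exists.imp fun i => (h i).geT_of_geT

lemma winf (hα : α < omega1) {ι : Sort*} {f g : ι → W} (h : ∀ i, AlphaLE α (f i) (g i)) :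
    AlphaLE α (Winf (Set.range f)) (Winf (Set.range g)) where
  leF_iff β hβ := by
    simp only [W.leF_Winf, Set.exists_range_iff]
    exact exists_congr fun i => (h i).leF_iff β hβ
  geT_iff β hβ := by
    simp only [W.geT_Winf (hβ.trans hα), Set.forall_mem_range]
    exact forall_congr' fun i => (h i).geT_iff β hβ
  leF_of_leF := by
    simp only [W.leF_Winf, Set.exists_range_iff]
    exact Exists.imp fun i => (h i).leF_of_leF
  geT_of_geT := by
    simp only [W.geT_Winf hα, Set.forall_mem_range]
    exact fun hv i => (h i).geT_of_geT (hv i)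

end AlphaLE

lemma sqa_iff_forall_alphaLE {α : Ordinal} {I J : Interp L} :
    sqa α I J ↔ ∀ A, AlphaLE α (I A) (J A) := by
  constructor
  · rintro ⟨heq, hF, hT⟩ A
    refine .of_val_eq_iff (fun β hβ => ?_) (fun β hβ => ?_) (@hF A) (@hT A)
    · exact Set.ext_iff.1 (heq β hβ β le_rfl).1 A
    · exact Set.ext_iff.1 (heq β hβ β le_rfl).2 A
  · intro h
    refine ⟨fun β hβ γ hγ => ⟨?_, ?_⟩, fun A => (h A).val_eq_F_of_val_eq_F,
      fun A => (h A).val_eq_T_of_val_eq_T⟩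
    · exact Set.ext fun A => (h A).val_eq_F_iff (hγ.trans_lt hβ)
    · exact Set.ext fun A => (h A).val_eq_T_iff (hγ.trans_lt hβ)

lemma Formula.alphaLE_eval {α : Ordinal} (hα : α < omega1) {I J : Interp L}
    (hIJ : ∀ A, AlphaLE α (I A) (J A)) (φ : Formula L) (h : ℕ → HU L) :
    AlphaLE α (φ.eval I h) (φ.eval J h) := by
  induction φ generalizing h with
  | verum | falsum => exact .refl α _
  | atom p ts => exact hIJ _
  | neg φ ih => exact (ih h).wneg
  | conj φ ψ ihφ ihψ => exact (ihφ h).min (ihψ h)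
  | disj φ ψ ihφ ihψ => exact (ihφ h).max (ihψ h)
  | all v φ ih => exact .winf hα fun u => ih (Function.update h v u)
  | ex v φ ih => exact .wsup hα fun u => ih (Function.update h v u)

lemma TP_eq_Wsup_range (P : Program L) (I : Interp L) (A : GroundAtom L) :
    TP P I A =
      Wsup (Set.range fun φ : {φ // (A, φ) ∈ groundInstances P} => φ.1.evalClosed I) := by
  unfold TP
  congr 1
  ext w
  simp [eq_comm]

/-- the immediate consequence operator is `α`-monotonic. -/
theorem TP_alpha_monotonic {L : Language} (P : Program L) (α : Ordinal)
    (hα : α < omega1) (I J : Interp L) (hIJ : sqa α I J) :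
    sqa α (TP P I) (TP P J) := by
  rw [sqa_iff_forall_alphaLE] at hIJ ⊢
  intro A
  rw [TP_eq_Wsup_range, TP_eq_Wsup_range]
  exact .wsup hα fun φ => φ.1.alphaLE_eval hα hIJ _

end ILP
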